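/- arXiv:2209.14804 — 3 statements merged into one kernel-verified Lean document; each statement's English description precedes it below -/
import Mathlib

section
/- Let C be a simple closed polygonal curve and let S_1,...,S_{3t} be pairwise disjoint sets such that for each i in {1,...,t} the triple (S_{3i-2}, S_{3i-1}, S_{3i}) is crossed by C in order, i.e., there exist points p_j in S_j lying on C appearing in index order along a cyclic traversal of C, and no straight-line segment contained in C's ambient free space passes through points of S_{3i-2}, S_{3i-1}, S_{3i} in that order. If, additionally, consecutive triples are non-overlapping (no two straight-line segments jointly realize all six sets of two consecutive triples in order), then C consists of at least t straight-line segments. -/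
/-- A closed polygonal curve given by its cyclic list of `m` vertices. -/
structure PolyCurve (m : ℕ) where
  v : Fin m → ℝ × ℝ

/-- The cyclic successor of an index. -/
def nxt {m : ℕ} (i : Fin m) : Fin m := ⟨(i.val + 1) % m, Nat.mod_lt _ i.pos⟩

/-- The boundary (trace) of a closed polygonal curve: the union of its segments. -/
def PolyCurve.boundary {m : ℕ} (C : PolyCurve m) : Set (ℝ × ℝ) :=
  ⋃ i : Fin m, segment ℝ (C.v i) (C.v (nxt i))

/-- Simplicity: distinct segments meet only in shared segment endpoints. -/
def PolyCurve.Simple {m : ℕ} (C : PolyCurve m) : Prop :=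
  ∀ i j : Fin m, i ≠ j →
    segment ℝ (C.v i) (C.v (nxt i)) ∩ segment ℝ (C.v j) (C.v (nxt j)) ⊆
      {C.v i, C.v (nxt i), C.v j, C.v (nxt j)}

/-- Point on segment `i` of the curve with affine parameter `t`. -/
noncomputable def PolyCurve.posOn {m : ℕ} (C : PolyCurve m) (i : Fin m) (t : ℝ) : ℝ × ℝ :=
  AffineMap.lineMap (C.v i) (C.v (nxt i)) t

/-- Lexicographic comparison of positions (segment index after a cyclic shift,
affine parameter) along a cyclic traversal. -/
def lexLe (a b : ℕ × ℝ) : Prop := a.1 < b.1 ∨ (a.1 = b.1 ∧ a.2 ≤ b.2)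

/-- The curve crosses the sets `S 0, …, S (k-1)` in order: it contains points of
each of the sets, appearing in index order along some cyclic traversal. -/
def CrossesInOrder {m : ℕ} (C : PolyCurve m) {k : ℕ} (S : Fin k → Set (ℝ × ℝ)) : Prop :=
  ∃ (o : Fin m) (idx : Fin k → Fin m) (t : Fin k → ℝ),
    (∀ j, t j ∈ Set.Icc (0 : ℝ) 1 ∧ C.posOn (idx j) (t j) ∈ S j) ∧
    (∀ j j' : Fin k, j ≤ j' →
      lexLe (((idx j - o : Fin m) : ℕ), t j) (((idx j' - o : Fin m) : ℕ), t j'))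

/-- `(S1,S2,S3)` is a non-collinear triple w.r.t. free space `D`: no straight-line
segment inside `D` passes through points of `S1`, `S2`, `S3` in this order. -/
def NoncollinearTriple (D : Set (ℝ × ℝ)) (S1 S2 S3 : Set (ℝ × ℝ)) : Prop :=
  ¬ ∃ p1 ∈ S1, ∃ p2 ∈ S2, ∃ p3 ∈ S3,
      p2 ∈ segment ℝ p1 p3 ∧ segment ℝ p1 p3 ⊆ D

/-- Two consecutive triples (six sets `S 0, …, S 5`) are non-overlapping: no two
straight-line segments inside `D` jointly visit all six sets in order. -/
def NonOverlapping (D : Set (ℝ × ℝ)) (S : Fin 6 → Set (ℝ × ℝ)) : Prop :=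
  ¬ ∃ (a b c d : ℝ × ℝ) (p : Fin 6 → ℝ × ℝ) (u : Fin 6 → ℝ) (jj : ℕ),
      segment ℝ a b ⊆ D ∧ segment ℝ c d ⊆ D ∧
      (∀ i, p i ∈ S i ∧ u i ∈ Set.Icc (0 : ℝ) 1) ∧
      (∀ i : Fin 6, ((i : ℕ) < jj → p i = AffineMap.lineMap a b (u i)) ∧
        (jj ≤ (i : ℕ) → p i = AffineMap.lineMap c d (u i))) ∧
      (∀ i i' : Fin 6, i ≤ i' → (((i' : ℕ) < jj) ∨ (jj ≤ (i : ℕ))) → u i ≤ u i')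

/-!
Within one triple the three crossing points cannot all lie on a single edge of `C`: that edge
lies in the free space and would pass through the three sets in order. So the crossing of each
triple advances the edge index, and since the triples are crossed one after the other, the edges
carrying the last points of the `t` triples are pairwise distinct.
-/

open Set AffineMap

section lineMap

variable {E : Type*} [AddCommGroup E] [Module ℝ E]

theorem lineMap_mem_segment_lineMap (a b : E) {s r u : ℝ} (hsr : s ≤ r) (hru : r ≤ u) :
    lineMap a b r ∈ segment ℝ (lineMap a b s) (lineMap a b u) := by
  rw [← image_segment ℝ (lineMap a b), segment_eq_Icc (𝕜 := ℝ) (hsr.trans hru)]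
  exact mem_image_of_mem _ ⟨hsr, hru⟩

theorem segment_lineMap_subset_segment (a b : E) {s u : ℝ} (hs : s ∈ Icc (0 : ℝ) 1)
    (hu : u ∈ Icc (0 : ℝ) 1) :
    segment ℝ (lineMap a b s) (lineMap a b u) ⊆ segment ℝ a b := by
  rw [← image_segment ℝ (lineMap a b), segment_eq_image_lineMap ℝ a b]
  exact image_mono ((convex_Icc (0 : ℝ) 1).segment_subset hs hu)

end lineMap

theorem lexLe.fst_le {a₁ b₁ : ℕ} {a₂ b₂ : ℝ} (h : lexLe (a₁, a₂) (b₁, b₂)) : a₁ ≤ b₁ :=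
  h.elim le_of_lt fun h => h.1.le

theorem lexLe.snd_le {a₁ b₁ : ℕ} {a₂ b₂ : ℝ} (h : lexLe (a₁, a₂) (b₁, b₂)) (h' : b₁ ≤ a₁) :
    a₂ ≤ b₂ :=
  h.elim (fun h => absurd h' h.not_ge) And.right

namespace PolyCurve

variable {m : ℕ} {C : PolyCurve m} {D : Set (ℝ × ℝ)}

theorem segment_posOn_subset_boundary (i : Fin m) {s u : ℝ} (hs : s ∈ Icc (0 : ℝ) 1)
    (hu : u ∈ Icc (0 : ℝ) 1) :
    segment ℝ (C.posOn i s) (C.posOn i u) ⊆ C.boundary :=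
  (segment_lineMap_subset_segment _ _ hs hu).trans (subset_iUnion_of_subset i subset_rfl)

theorem not_noncollinearTriple_of_posOn_mem (hD : C.boundary ⊆ D) (i : Fin m)
    {S₁ S₂ S₃ : Set (ℝ × ℝ)} {s r u : ℝ} (hs : s ∈ Icc (0 : ℝ) 1) (hu : u ∈ Icc (0 : ℝ) 1)
    (hsr : s ≤ r) (hru : r ≤ u)
    (h₁ : C.posOn i s ∈ S₁) (h₂ : C.posOn i r ∈ S₂) (h₃ : C.posOn i u ∈ S₃) :
    ¬ NoncollinearTriple D S₁ S₂ S₃ := fun htriple =>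
  htriple ⟨_, h₁, _, h₂, _, h₃, lineMap_mem_segment_lineMap _ _ hsr hru,
    (segment_posOn_subset_boundary i hs hu).trans hD⟩

theorem edge_lt_of_noncollinearTriple (hD : C.boundary ⊆ D) {k : ℕ} {S : Fin k → Set (ℝ × ℝ)}
    {o : Fin m} {idx : Fin k → Fin m} {τ : Fin k → ℝ}
    (hmem : ∀ j, τ j ∈ Icc (0 : ℝ) 1 ∧ C.posOn (idx j) (τ j) ∈ S j)
    (hord : ∀ j j' : Fin k, j ≤ j' →
      lexLe (((idx j - o : Fin m) : ℕ), τ j) (((idx j' - o : Fin m) : ℕ), τ j'))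
    {j₀ j₁ j₂ : Fin k} (h₀₁ : j₀ ≤ j₁) (h₁₂ : j₁ ≤ j₂)
    (htriple : NoncollinearTriple D (S j₀) (S j₁) (S j₂)) :
    idx j₀ - o < idx j₂ - o := by
  have : NeZero m := ⟨o.pos.ne'⟩
  by_contra! h₂₀
  rw [Fin.le_iff_val_le_val] at h₂₀
  have l₀₁ := hord _ _ h₀₁
  have l₁₂ := hord _ _ h₁₂
  have f₀₁ := l₀₁.fst_le
  have f₁₂ := l₁₂.fst_le
  have e₁ : idx j₁ = idx j₀ := sub_left_injective (Fin.ext (by omega) : idx j₁ - o = idx j₀ - o)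
  have e₂ : idx j₂ = idx j₀ := sub_left_injective (Fin.ext (by omega) : idx j₂ - o = idx j₀ - o)
  have hτ₀₁ : τ j₀ ≤ τ j₁ := l₀₁.snd_le (by rw [e₁])
  have hτ₁₂ : τ j₁ ≤ τ j₂ := l₁₂.snd_le (by rw [e₁, e₂])
  have h₁ := (hmem j₁).2
  have h₂ := (hmem j₂).2
  rw [e₁] at h₁
  rw [e₂] at h₂
  exact not_noncollinearTriple_of_posOn_mem hD (idx j₀) (hmem j₀).1 (hmem j₂).1 hτ₀₁ hτ₁₂
    (hmem j₀).2 h₁ h₂ htriple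

end PolyCurve

/-- a simple closed polygonal curve crossing `t` pairwise disjoint,
consecutive-non-overlapping, non-collinear triples in order consists of at
least `t` straight-line segments. -/
theorem stmt_1 (m t : ℕ) (C : PolyCurve m)
    (D : Set (ℝ × ℝ)) (hD : C.boundary ⊆ D)
    (S : Fin (3 * t) → Set (ℝ × ℝ))
    (htriple : ∀ i : Fin t,
      NoncollinearTriple D (S ⟨3 * i.val, by have := i.isLt; omega⟩)
        (S ⟨3 * i.val + 1, by have := i.isLt; omega⟩)
        (S ⟨3 * i.val + 2, by have := i.isLt; omega⟩))
    (hcross : CrossesInOrder C S) :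
    t ≤ m := by
  obtain ⟨o, idx, τ, hmem, hord⟩ := hcross
  let lastEdge : Fin t → Fin m := fun n => idx ⟨3 * n + 2, by omega⟩ - o
  have hlastEdge : StrictMono lastEdge := by
    intro a b hab
    calc lastEdge a ≤ idx ⟨3 * b, by omega⟩ - o :=
          (hord _ _ (Fin.mk_le_mk.2 (by omega))).fst_le
      _ < lastEdge b :=
          C.edge_lt_of_noncollinearTriple hD hmem hord (Fin.mk_le_mk.2 (by omega))
            (Fin.mk_le_mk.2 (by omega)) (htriple b)
  exact Fin.le_of_injective lastEdge hlastEdge.injective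
end

section
/- Any two disjoint compact convex sets in the plane with nonempty interiors have at most four common tangent lines (bitangents). -/
/-!
Separate `A` from `B` strictly by a linear form: `f < c` on `A`, `c < f` on `B`. Every bitangent
can be written `{g = d}` with `A ⊆ {g ≤ d}`; it is *outer* or *inner* according as `B` lies on the
same side as `A` or on the other one, and since it meets both sets it is not parallel to `{f = c}`,
so `det (f, g) ≠ 0`. Two bitangents of the same kind whose determinants have the same sign
coincide: writing `p g₂ = q g₁ + m f` with `p, q > 0`, the tangency inequalities squeeze `m f` at
points of `A` and at points of `B` against the same number, which forces `m = 0`. This leaves at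
most `2 × 2` bitangents.
-/

open Module Set

theorem AffineSubspace.exists_eq_setOf_apply_eq {K E : Type*} [Field K] [AddCommGroup E]
    [Module K E] [FiniteDimensional K E] {L : AffineSubspace K E}
    (hL : finrank K L.direction + 1 = finrank K E) (hne : (L : Set E).Nonempty) :
    ∃ g : Dual K E, g ≠ 0 ∧ ∃ d, (L : Set E) = {z | g z = d} := by
  obtain ⟨p, hp⟩ := hne
  obtain ⟨g, hg0, hmap⟩ := Submodule.exists_dual_map_eq_bot_of_lt_top
    (Submodule.lt_top_of_finrank_lt_finrank (s := L.direction) (by omega)) inferInstance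
  have hdir : L.direction = LinearMap.ker g :=
    Submodule.eq_of_le_of_finrank_eq (LinearMap.le_ker_iff_map.2 hmap)
      (by have := Dual.finrank_ker_add_one_of_ne_zero hg0; omega)
  refine ⟨g, hg0, g p, Set.ext fun z => ?_⟩
  rw [SetLike.mem_coe, ← AffineSubspace.vsub_right_mem_direction_iff_mem hp, hdir,
    LinearMap.mem_ker, vsub_eq_sub, map_sub, sub_eq_zero]
  rfl

theorem Convex.forall_le_or_forall_ge_of_inter_interior_eq_empty {E : Type*} [AddCommGroup E]
    [Module ℝ E] [TopologicalSpace E] [IsTopologicalAddGroup E] [ContinuousSMul ℝ E]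
    {A : Set E} (hA : Convex ℝ A) (hAint : (interior A).Nonempty) {g : E →ₗ[ℝ] ℝ}
    (hg : Continuous g) {d : ℝ} (h : {z | g z = d} ∩ interior A = ∅) :
    (∀ a ∈ A, g a ≤ d) ∨ ∀ a ∈ A, d ≤ g a := by
  have hcover : interior A ⊆ {z | g z < d} ∪ {z | d < g z} := fun z hz =>
    (lt_or_gt_of_ne fun hzd => (h ▸ mem_inter hzd hz : z ∈ (∅ : Set E))).imp id id
  have hA_sub : A ⊆ closure (interior A) := by
    rw [hA.closure_interior_eq_closure_of_nonempty_interior hAint]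
    exact subset_closure
  rcases hA.interior.isPreconnected.subset_or_subset (isOpen_lt hg continuous_const)
    (isOpen_lt continuous_const hg)
    (disjoint_left.2 fun _ (h₁ : _ < d) (h₂ : d < _) => lt_asymm h₁ h₂) hcover with hlt | hgt
  · exact .inl fun a ha => closure_minimal (hlt.trans fun _ (h : _ < d) => h.le)
      (isClosed_le hg continuous_const) (hA_sub ha)
  · exact .inr fun a ha => closure_minimal (hgt.trans fun _ (h : d < _) => h.le)
      (isClosed_le continuous_const hg) (hA_sub ha)

def wedge (f g : (ℝ × ℝ) →ₗ[ℝ] ℝ) : ℝ := f (1, 0) * g (0, 1) - f (0, 1) * g (1, 0)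

theorem LinearMap.apply_eq_fst_mul_add_snd_mul (g : (ℝ × ℝ) →ₗ[ℝ] ℝ) (z : ℝ × ℝ) :
    g z = z.1 * g (1, 0) + z.2 * g (0, 1) := by
  conv_lhs => rw [show z = z.1 • ((1 : ℝ), (0 : ℝ)) + z.2 • ((0 : ℝ), (1 : ℝ)) by ext <;> simp]
  simp only [map_add, map_smul, smul_eq_mul]

theorem wedge_mul_apply (f g h : (ℝ × ℝ) →ₗ[ℝ] ℝ) (z : ℝ × ℝ) :
    wedge f g * h z = wedge h g * f z + wedge f h * g z := by
  simp only [wedge, f.apply_eq_fst_mul_add_snd_mul z, g.apply_eq_fst_mul_add_snd_mul z,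
    h.apply_eq_fst_mul_add_snd_mul z]
  ring

theorem wedge_ne_zero {f g : (ℝ × ℝ) →ₗ[ℝ] ℝ} (hg : g ≠ 0) {x y : ℝ × ℝ} (hgxy : g x = g y)
    (hfxy : f x ≠ f y) : wedge f g ≠ 0 := by
  intro hw
  rw [wedge] at hw
  have hf : f x - f y ≠ 0 := sub_ne_zero.2 hfxy
  rw [g.apply_eq_fst_mul_add_snd_mul x, g.apply_eq_fst_mul_add_snd_mul y] at hgxy
  have h₁ : g (1, 0) * (f x - f y) = 0 := by
    rw [f.apply_eq_fst_mul_add_snd_mul x, f.apply_eq_fst_mul_add_snd_mul y]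
    linear_combination f (1, 0) * hgxy - (x.2 - y.2) * hw
  have h₂ : g (0, 1) * (f x - f y) = 0 := by
    rw [f.apply_eq_fst_mul_add_snd_mul x, f.apply_eq_fst_mul_add_snd_mul y]
    linear_combination f (0, 1) * hgxy + (x.1 - y.1) * hw
  refine hg (LinearMap.ext fun z => ?_)
  rw [g.apply_eq_fst_mul_add_snd_mul z, (mul_eq_zero.1 h₁).resolve_right hf,
    (mul_eq_zero.1 h₂).resolve_right hf]
  simp

def IsOrientedBitangent (A B : Set (ℝ × ℝ)) (g : (ℝ × ℝ) →ₗ[ℝ] ℝ) (d : ℝ) (outer : Bool) :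
    Prop :=
  (∃ a ∈ A, g a = d) ∧ (∃ b ∈ B, g b = d) ∧ (∀ a ∈ A, g a ≤ d) ∧
    ∀ b ∈ B, if outer then g b ≤ d else d ≤ g b

section Separated

variable {A B : Set (ℝ × ℝ)} {f : (ℝ × ℝ) →ₗ[ℝ] ℝ} {c : ℝ}

theorem IsOrientedBitangent.wedge_ne_zero (hA : ∀ a ∈ A, f a < c) (hB : ∀ b ∈ B, c < f b)
    {g : (ℝ × ℝ) →ₗ[ℝ] ℝ} (hg : g ≠ 0) {d : ℝ} {outer : Bool}
    (h : IsOrientedBitangent A B g d outer) : wedge f g ≠ 0 := by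
  obtain ⟨⟨a, ha, hga⟩, ⟨b, hb, hgb⟩, -⟩ := h
  exact _root_.wedge_ne_zero hg (hga.trans hgb.symm) ((hA a ha).trans (hB b hb)).ne

theorem IsOrientedBitangent.setOf_eq_of_pos_combination (hA : ∀ a ∈ A, f a < c)
    (hB : ∀ b ∈ B, c < f b) {g₁ g₂ : (ℝ × ℝ) →ₗ[ℝ] ℝ} {d₁ d₂ : ℝ} {outer : Bool}
    (h₁ : IsOrientedBitangent A B g₁ d₁ outer) (h₂ : IsOrientedBitangent A B g₂ d₂ outer)
    {p q m : ℝ} (hp : 0 < p) (hq : 0 < q)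
    (hcomb : ∀ z, p * g₂ z = q * g₁ z + m * f z) :
    {z | g₁ z = d₁} = {z | g₂ z = d₂} := by
  obtain ⟨⟨a₁, ha₁, hga₁⟩, ⟨b₁, hb₁, hgb₁⟩, hA₁, hB₁⟩ := h₁
  obtain ⟨⟨a₂, ha₂, hga₂⟩, ⟨b₂, hb₂, hgb₂⟩, hA₂, hB₂⟩ := h₂
  have lower : m * f a₁ ≤ p * d₂ - q * d₁ := by nlinarith [hcomb a₁, hA₂ a₁ ha₁]
  have upper : p * d₂ - q * d₁ ≤ m * f a₂ := by nlinarith [hcomb a₂, hA₁ a₂ ha₂]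
  -- Bounding `p d₂ - q d₁` in the same way at `b₁, b₂` gives `m f b ≤ m f a` and
  -- `m f a' ≤ m f b'` for some `a, a' ∈ A` and `b, b' ∈ B`, while `f a < c < f b`.
  have hm : m = 0 := by
    have hb₁' := hB₂ b₁ hb₁
    have hb₂' := hB₁ b₂ hb₂
    cases outer <;> simp only [Bool.false_eq_true, if_true, if_false] at hb₁' hb₂' <;>
      nlinarith [hcomb b₁, hcomb b₂, hA a₁ ha₁, hA a₂ ha₂, hB b₁ hb₁, hB b₂ hb₂]
  have hd : p * d₂ = q * d₁ := by
    rw [hm, zero_mul] at lower upper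
    linarith
  ext z
  have hz := hcomb z
  rw [hm, zero_mul, add_zero] at hz
  constructor
  · intro (h : g₁ z = d₁)
    exact mul_left_cancel₀ hp.ne' (by rw [hz, hd, h])
  · intro (h : g₂ z = d₂)
    exact mul_left_cancel₀ hq.ne' (by rw [← hd, ← hz, h])

theorem IsOrientedBitangent.setOf_eq (hA : ∀ a ∈ A, f a < c) (hB : ∀ b ∈ B, c < f b)
    {g₁ g₂ : (ℝ × ℝ) →ₗ[ℝ] ℝ} (hg₁ : g₁ ≠ 0) (hg₂ : g₂ ≠ 0) {d₁ d₂ : ℝ} {outer : Bool}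
    (h₁ : IsOrientedBitangent A B g₁ d₁ outer) (h₂ : IsOrientedBitangent A B g₂ d₂ outer)
    (hsign : 0 < wedge f g₁ ↔ 0 < wedge f g₂) :
    {z | g₁ z = d₁} = {z | g₂ z = d₂} := by
  have hw : 0 < wedge f g₁ * wedge f g₂ := by
    rcases (h₁.wedge_ne_zero hA hB hg₁).lt_or_gt with hw₁ | hw₁
    · exact mul_pos_of_neg_of_neg hw₁ ((not_lt.1 (hsign.not.1 hw₁.not_gt)).lt_of_ne
        (h₂.wedge_ne_zero hA hB hg₂))
    · exact mul_pos hw₁ (hsign.1 hw₁)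
  exact h₁.setOf_eq_of_pos_combination hA hB h₂ (m := wedge f g₁ * wedge g₂ g₁)
    (mul_self_pos.2 (left_ne_zero_of_mul hw.ne')) hw
    fun z => by linear_combination wedge f g₁ * wedge_mul_apply f g₁ g₂ z

end Separated

def bitangents (A B : Set (ℝ × ℝ)) : Set (AffineSubspace ℝ (ℝ × ℝ)) :=
  {L | finrank ℝ L.direction = 1 ∧
    ((L : Set (ℝ × ℝ)) ∩ A).Nonempty ∧ (L : Set (ℝ × ℝ)) ∩ interior A = ∅ ∧
    ((L : Set (ℝ × ℝ)) ∩ B).Nonempty ∧ (L : Set (ℝ × ℝ)) ∩ interior B = ∅}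

theorem exists_isOrientedBitangent_of_mem_bitangents {A B : Set (ℝ × ℝ)} (hAconv : Convex ℝ A)
    (hBconv : Convex ℝ B) (hAint : (interior A).Nonempty) (hBint : (interior B).Nonempty)
    {L : AffineSubspace ℝ (ℝ × ℝ)} (hL : L ∈ bitangents A B) :
    ∃ g : (ℝ × ℝ) →ₗ[ℝ] ℝ, g ≠ 0 ∧ ∃ d, (L : Set (ℝ × ℝ)) = {z | g z = d} ∧
      ∃ outer, IsOrientedBitangent A B g d outer := by
  obtain ⟨hL, ⟨a, haL, ha⟩, hLA, ⟨b, hbL, hb⟩, hLB⟩ := hL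
  obtain ⟨g₀, hg₀, d₀, hL₀⟩ := L.exists_eq_setOf_apply_eq (by simp [hL]) ⟨a, haL⟩
  obtain ⟨g, hg, d, hLg, hAg⟩ : ∃ g : (ℝ × ℝ) →ₗ[ℝ] ℝ, g ≠ 0 ∧ ∃ d,
      (L : Set (ℝ × ℝ)) = {z | g z = d} ∧ ∀ a ∈ A, g a ≤ d := by
    rcases hAconv.forall_le_or_forall_ge_of_inter_interior_eq_empty hAint
      g₀.continuous_of_finiteDimensional (hL₀ ▸ hLA) with hle | hge
    · exact ⟨g₀, hg₀, d₀, hL₀, hle⟩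
    · refine ⟨-g₀, neg_ne_zero.2 hg₀, -d₀, by simp [hL₀], fun a ha => ?_⟩
      simpa using hge a ha
  rw [hLg] at haL hbL
  refine ⟨g, hg, d, hLg, ?_⟩
  rcases hBconv.forall_le_or_forall_ge_of_inter_interior_eq_empty hBint
    g.continuous_of_finiteDimensional (hLg ▸ hLB) with hle | hge
  · exact ⟨true, ⟨a, ha, haL⟩, ⟨b, hb, hbL⟩, hAg, by simpa using hle⟩
  · exact ⟨false, ⟨a, ha, haL⟩, ⟨b, hb, hbL⟩, hAg, by simpa using hge⟩

/-- two disjoint compact convex planar sets with nonempty interior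
have at most four common tangent lines (bitangents). A line is modeled as a
one-dimensional affine subspace; it is tangent to a set if it meets the set
but not its interior. -/
theorem stmt_2 (A B : Set (ℝ × ℝ))
    (hAcomp : IsCompact A) (hBcomp : IsCompact B)
    (hAconv : Convex ℝ A) (hBconv : Convex ℝ B)
    (hAint : (interior A).Nonempty) (hBint : (interior B).Nonempty)
    (hdisj : Disjoint A B) :
    {L : AffineSubspace ℝ (ℝ × ℝ) |
        Module.finrank ℝ L.direction = 1 ∧
        ((L : Set (ℝ × ℝ)) ∩ A).Nonempty ∧ (L : Set (ℝ × ℝ)) ∩ interior A = ∅ ∧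
        ((L : Set (ℝ × ℝ)) ∩ B).Nonempty ∧
        (L : Set (ℝ × ℝ)) ∩ interior B = ∅}.ncard ≤ 4 := by
  change (bitangents A B).ncard ≤ 4
  obtain ⟨f, c, v, hA, hcv, hvB⟩ :=
    geometric_hahn_banach_compact_closed hAconv hAcomp hBconv hBcomp.isClosed hdisj
  have hB : ∀ b ∈ B, c < f b := fun b hb => hcv.trans (hvB b hb)
  choose g hg d hLg outer hbit using fun L : bitangents A B =>
    exists_isOrientedBitangent_of_mem_bitangents hAconv hBconv hAint hBint L.2
  have hinj : Function.Injective fun L => (outer L, decide (0 < wedge f.toLinearMap (g L))) := by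
    intro L₁ L₂ h
    simp only [Prod.mk.injEq, decide_eq_decide] at h
    refine Subtype.ext (AffineSubspace.coe_injective ?_)
    rw [hLg, hLg, (hbit L₁).setOf_eq hA hB (hg L₁) (hg L₂) (h.1 ▸ hbit L₂) h.2]
  calc (bitangents A B).ncard = Nat.card (bitangents A B) := (Nat.card_coe_set_eq _).symm
    _ ≤ Nat.card (Bool × Bool) := Nat.card_le_card_of_injective _ hinj
    _ = 4 := by simp
end

section
/- Let f: {1,...,k} → ℝ be the cost of fencing z consecutive inner polygons of a wire, with f(1)=3, f(2)=3, and f(z)=2z for z ≥ 3. Then in any partition of a path of k elements (k even) into intervals, the minimum total cost is 3k/2, and it is attained only by the partition into consecutive pairs. -/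
/-- Cost of fencing `z` consecutive inner polygons of a wire:
`f 1 = 3`, `f 2 = 3`, and `f z = 2 z` for `z ≥ 3`. -/
def wireCost (z : ℕ) : ℕ := if z ≤ 2 then 3 else 2 * z

lemma wireCost_pt (z : ℕ) (hz : 0 < z) : 3 * z ≤ 2 * wireCost z := by
  unfold wireCost; split <;> omega

lemma wireCost_eq (z : ℕ) (hz : 0 < z) (h : 2 * wireCost z = 3 * z) : z = 2 := by
  unfold wireCost at h; split at h <;> omega

lemma sum_le (l : List ℕ) (h : ∀ z ∈ l, 0 < z) :
    3 * l.sum ≤ 2 * (l.map wireCost).sum := by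
  induction l with
  | nil => simp
  | cons a t ih =>
    simp only [List.map_cons, List.sum_cons, Nat.mul_add]
    have h1 := wireCost_pt a (h a (by simp))
    have h2 := ih (fun z hz => h z (by simp [hz]))
    omega

lemma all_two (l : List ℕ) (h : ∀ z ∈ l, 0 < z)
    (he : 2 * (l.map wireCost).sum = 3 * l.sum) : ∀ z ∈ l, z = 2 := by
  induction l with
  | nil => simp
  | cons a t ih =>
    have h1 := wireCost_pt a (h a (by simp))
    have h2 := sum_le t (fun z hz => h z (by simp [hz]))
    simp only [List.map_cons, List.sum_cons, Nat.mul_add] at he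
    intro z hz
    rcases List.mem_cons.1 hz with rfl | hz'
    · exact wireCost_eq z (h z (by simp)) (by omega)
    · exact ih (fun z hz => h z (by simp [hz])) (by omega) z hz'

/-- a partition of a path of `k` elements (`k` even, positive)
into intervals is modeled by the list of its interval lengths (all positive,
summing to `k`). The minimum total cost is `3 * k / 2`, attained exactly by
the partition into consecutive pairs. -/
theorem stmt_12 (k : ℕ) (hk : Even k) (hk0 : 0 < k) :
    (∀ l : List ℕ, (∀ z ∈ l, 0 < z) → l.sum = k →
      3 * k / 2 ≤ (l.map wireCost).sum) ∧
    (∀ l : List ℕ, (∀ z ∈ l, 0 < z) → l.sum = k →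
      ((l.map wireCost).sum = 3 * k / 2 ↔ l = List.replicate (k / 2) 2)) := by
  obtain ⟨m, hm⟩ := hk
  have hk2 : k = 2 * m := by omega
  constructor
  · intro l hl hs
    have := sum_le l hl
    rw [hs] at this
    omega
  · intro l hl hs
    constructor
    · intro he
      have hle := sum_le l hl
      rw [hs] at hle
      have h2 : 2 * (l.map wireCost).sum = 3 * l.sum := by rw [hs]; omega
      have h22 := all_two l hl h2
      have : l = List.replicate l.length 2 := by
        apply List.eq_replicate_of_mem h22
      have hlen : l.length = k / 2 := by
        have : l.sum = 2 * l.length := by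
          rw [this]; simp [List.sum_replicate, Nat.mul_comm]
        omega
      rw [← hlen]; exact ‹l = List.replicate l.length 2›
    · rintro rfl
      have : List.map wireCost (List.replicate (k / 2) 2) = List.replicate (k / 2) 3 := by
        simp [wireCost]
      rw [this]
      simp [List.sum_replicate]
      omega
end
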